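/- For every alphabet size σ ≥ 2 and all integers j ≥ 1 and i ≥ j + 1, the number of unbordered strings of length i whose first letter differs from each of the following j letters satisfies b_j(i, σ) ≥ (σ−1)^{j+1} · σ^{i−j−1} − σ^{i−2}. -/

import Mathlib

open List Finset Filter

/-- `S` is unbordered: it has no nonempty proper prefix that is also a suffix. -/
def Unbordered {α : Type*} (S : List α) : Prop :=
  ∀ B : List α, B ≠ [] → B.length < S.length → B <+: S → ¬ B <:+ S

/-- The length of the maximal unbordered factor of `S`. -/
noncomputable def muf {α : Type*} (S : List α) : ℕ :=
  sSup {k | ∃ F : List α, F <:+: S ∧ Unbordered F ∧ F.length = k}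


/-- `unbCountJ σ i j` : the number of unbordered strings of length `i` over an alphabet
of size `σ` whose first letter differs from each of the `j` letters that follow it. -/
noncomputable def unbCountJ (σ i j : ℕ) : ℕ :=
  Nat.card {f : Fin i → Fin σ //
    Unbordered (List.ofFn f) ∧
    ∀ k l : Fin i, 1 ≤ (k : ℕ) → (k : ℕ) ≤ j → (l : ℕ) = 0 → f k ≠ f l}


/-!
Call a word *good* if its first letter differs from the letters at positions `1, …, j` and from
its last letter; there are `(σ - 1) ^ (j + 1) * σ ^ (i - j - 1)` good words of length `i` (at
least as many when `i = j + 1`). A good word with a border `B` has the period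
`p = i - |B|`, so its first letter recurs at position `p`, which forces `j < p < i - 1`.
A `p`-periodic word is determined by its first `p` letters, which again avoid the first letter at
positions `1, …, j`, so at most `σ (σ - 1) ^ j σ ^ (p - 1 - j)` words have period `p`. Summed over
`j < p < i - 1` this geometric sum is at most `σ ^ (i - 2)`.
-/

theorem card_filter_forall_apply_ne {ι α : Type*} [Fintype ι] [DecidableEq ι] [Fintype α]
    [DecidableEq α] {z : ι} {K : Finset ι} (hz : z ∉ K) :
    #{f : ι → α | ∀ k ∈ K, f k ≠ f z} =
      Fintype.card α * (Fintype.card α - 1) ^ #K * Fintype.card α ^ (Fintype.card ι - 1 - #K) := by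
  have fiber (a : α) :
      filter (fun f => f z = a) {f : ι → α | ∀ k ∈ K, f k ≠ f z} = Fintype.piFinset
        (fun k => if k = z then {a} else if k ∈ K then univ.erase a else univ) := by
    ext f
    simp only [Finset.mem_filter, Finset.mem_univ, true_and, Fintype.mem_piFinset]
    constructor
    · rintro ⟨hK, rfl⟩ k
      split_ifs with hkz hkK
      · simp [hkz]
      · simpa using hK k hkK
      · simp
    · intro h
      have hza : f z = a := by simpa using h z
      refine ⟨fun k hk => ?_, hza⟩
      have hkz : k ≠ z := by rintro rfl; exact hz hk
      simpa [hkz, hk, hza] using h k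
  rw [card_eq_sum_card_fiberwise (f := fun f => f z) (t := univ) (fun _ _ => mem_univ _)]
  have hKz : {k ∈ univ.erase z | k ∈ K} = K := by
    ext k; simp only [Finset.mem_filter, mem_erase, Finset.mem_univ, and_true]
    exact ⟨And.right, fun hk => ⟨ne_of_mem_of_not_mem hk hz, hk⟩⟩
  have hcompl : #{k ∈ univ.erase z | k ∉ K} = Fintype.card ι - 1 - #K := by
    have := card_filter_add_card_filter_not (s := univ.erase z) (· ∈ K)
    rw [hKz, card_erase_of_mem (Finset.mem_univ z), card_univ] at this
    omega
  have card_fiber (a : α) : #(Fintype.piFinset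
      (fun k => if k = z then {a} else if k ∈ K then univ.erase a else univ)) =
      (Fintype.card α - 1) ^ #K * Fintype.card α ^ (Fintype.card ι - 1 - #K) := by
    rw [Fintype.card_piFinset, ← mul_prod_erase univ _ (mem_univ z), if_pos rfl, card_singleton,
      one_mul]
    have hcard (k) (hk : k ∈ univ.erase z) : #(if k = z then {a} else if k ∈ K then univ.erase a
        else univ) = if k ∈ K then Fintype.card α - 1 else Fintype.card α := by
      simp [ne_of_mem_erase hk, apply_ite card, card_erase_of_mem]
    rw [prod_congr rfl hcard, prod_ite, hKz, prod_const, prod_const, hcompl]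
  simp_rw [fiber, card_fiber, sum_const, card_univ, smul_eq_mul, mul_assoc]

section Words

open scoped Classical

variable {α : Type*}

theorem exists_hasPeriod_of_not_unbordered {w : List α} (h : ¬ Unbordered w) :
    ∃ p, 0 < p ∧ p < w.length ∧ w.HasPeriod p := by
  simp only [Unbordered, not_forall, not_not] at h
  obtain ⟨B, hB, hBw, hpre, u, rfl⟩ := h
  have hB0 : 0 < B.length := length_pos_iff.mpr hB
  rw [length_append] at hBw
  refine ⟨u.length, by omega, by rw [length_append]; omega, ?_⟩
  rw [HasPeriod, take_left, prefix_append_right_inj]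
  exact hpre

theorem List.HasPeriod.eq_of_take_eq {p : ℕ} {w v : List α} (hw : w.HasPeriod p)
    (hv : v.HasPeriod p) (hp : 0 < p) (hlen : w.length = v.length) (h : w.take p = v.take p) :
    w = v := by
  refine ext_getElem? fun i => ?_
  rcases lt_or_ge i w.length with hi | hi
  · have hmod := Nat.mod_lt i hp
    rw [hasPeriod_iff_forall_getElem?_mod.1 hw i hi, hasPeriod_iff_forall_getElem?_mod.1 hv i
      (hlen ▸ hi), ← getElem?_take_of_lt hmod, h, getElem?_take_of_lt hmod]
  · rw [getElem?_eq_none hi, getElem?_eq_none (hlen ▸ hi)]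

variable {n p : ℕ}

-- As in `unbCountJ`, the first position is an index `l` with `(l : ℕ) = 0`, so `n` may be `0`.
def HeadAvoids (S : Finset ℕ) (f : Fin n → α) : Prop :=
  ∀ k l : Fin n, (k : ℕ) ∈ S → (l : ℕ) = 0 → f k ≠ f l

theorem headAvoids_iff {S : Finset ℕ} {f : Fin n → α} (hn : 0 < n) :
    HeadAvoids S f ↔ ∀ k : Fin n, (k : ℕ) ∈ S → f k ≠ f ⟨0, hn⟩ := by
  refine ⟨fun h k hk => h k _ hk rfl, fun h k l hk hl => ?_⟩
  obtain rfl : l = ⟨0, hn⟩ := Fin.ext hl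
  exact h k hk

theorem HeadAvoids.not_hasPeriod {S : Finset ℕ} {f : Fin n → α} (hf : HeadAvoids S f)
    (hpS : p ∈ S) (hpn : p < n) : ¬ (ofFn f).HasPeriod p := fun hper => by
  have := hasPeriod_iff_getElem?.1 hper 0 (by rw [length_ofFn]; omega)
  rw [List.getElem?_ofFn, List.getElem?_ofFn, zero_add, dif_pos (by omega), dif_pos hpn,
    Option.some_inj] at this
  exact hf ⟨p, hpn⟩ ⟨0, by omega⟩ hpS rfl this.symm

variable [Fintype α]

theorem card_headAvoids {S : Finset ℕ} (hn : 0 < n) (hS : S ⊆ Ioo 0 n) :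
    #{f : Fin n → α | HeadAvoids S f} =
      Fintype.card α * (Fintype.card α - 1) ^ #S * Fintype.card α ^ (n - 1 - #S) := by
  have hSn : ∀ m ∈ S, m < n := fun m hm => (mem_Ioo.1 (hS hm)).2
  have h0 : (⟨0, hn⟩ : Fin n) ∉ S.attachFin hSn := by
    simpa [mem_attachFin] using fun h => (mem_Ioo.1 (hS h)).1.ne rfl
  have := card_filter_forall_apply_ne (α := α) h0
  rw [card_attachFin, Fintype.card_fin] at this
  rw [← this]
  simp only [headAvoids_iff hn, mem_attachFin]

theorem card_headAvoids_hasPeriod_le {S : Finset ℕ} (hp : 0 < p) (hpn : p ≤ n) :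
    #{f : Fin n → α | HeadAvoids S f ∧ (ofFn f).HasPeriod p} ≤
      #{g : Fin p → α | HeadAvoids S g} := by
  refine card_le_card_of_injOn (Fin.take p hpn) (fun f hf => ?_) (fun f hf g hg hfg => ?_)
  · simp only [coe_filter, Finset.mem_univ, true_and, Set.mem_ofPred_eq] at hf ⊢
    exact fun k l hk hl => hf.1 _ _ hk hl
  · simp only [coe_filter, Finset.mem_univ, true_and, Set.mem_ofPred_eq] at hf hg
    have := congrArg ofFn hfg
    rw [Fin.ofFn_take_eq_take_ofFn, Fin.ofFn_take_eq_take_ofFn] at this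
    exact ofFn_injective (hf.2.eq_of_take_eq hg.2 hp (by simp) this)

theorem card_headAvoids_le_add_sum {S T P : Finset ℕ} (hTS : T ⊆ S)
    (hP : ∀ p ∈ Ioo 0 n, p ∉ S → p ∈ P) :
    #{f : Fin n → α | HeadAvoids S f} ≤ #{f : Fin n → α | Unbordered (ofFn f) ∧ HeadAvoids T f}
      + ∑ p ∈ P, #{f : Fin n → α | HeadAvoids T f ∧ (ofFn f).HasPeriod p} := by
  refine (card_le_card fun f hf => ?_).trans ((card_union_le _ _).trans
    (add_le_add le_rfl card_biUnion_le))
  simp only [Finset.mem_filter, Finset.mem_univ, true_and, mem_union, mem_biUnion] at hf ⊢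
  have hfT : HeadAvoids T f := fun k l hk => hf k l (hTS hk)
  by_cases hu : Unbordered (ofFn f)
  · exact .inl ⟨hu, hfT⟩
  · obtain ⟨p, hp0, hpn, hper⟩ := exists_hasPeriod_of_not_unbordered hu
    rw [length_ofFn] at hpn
    have hpS : p ∉ S := fun hpS => hf.not_hasPeriod hpS hpn hper
    exact .inr ⟨p, hP p (mem_Ioo.2 ⟨hp0, hpn⟩) hpS, hfT, hper⟩

theorem le_card_headAvoids_insert_last {j m : ℕ} (hj : j ≤ m + 1) :
    (Fintype.card α - 1) ^ (j + 1) * Fintype.card α ^ (m + 1 - j) ≤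
      #{f : Fin (m + 2) → α | HeadAvoids (insert (m + 1) (Icc 1 j)) f} := by
  rw [card_headAvoids (by omega) (by intro k; simp only [mem_insert, mem_Icc, mem_Ioo]; omega)]
  rcases hj.lt_or_eq with hj | rfl
  · rw [card_insert_of_notMem (by simp only [mem_Icc]; omega), Nat.card_Icc, Nat.add_sub_cancel,
      show m + 2 - 1 - (j + 1) = m - j by omega, show m + 1 - j = m - j + 1 by omega]
    exact le_of_eq (by ring)
  · rw [insert_eq_of_mem (by simp), Nat.card_Icc, Nat.add_sub_cancel, Nat.sub_self, pow_zero,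
      pow_succ']
    gcongr
    omega

end Words

theorem sum_Ico_mul_pow_le {σ j : ℕ} (hσ : 1 ≤ σ) (hj : 1 ≤ j) (n : ℕ) :
    ∑ p ∈ Ico (j + 1) (n + 1), σ * (σ - 1) ^ j * σ ^ (p - 1 - j) ≤ σ ^ n := by
  obtain ⟨k, rfl⟩ : ∃ k, j = k + 1 := ⟨j - 1, by omega⟩
  rcases le_or_gt (k + 1) n with hjn | hnj
  · obtain ⟨m, rfl⟩ := Nat.exists_eq_add_of_le hjn
    have hgeom : (σ - 1) * ∑ t ∈ range m, σ ^ t ≤ σ ^ m := by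
      have := geom_sum_mul_add (σ - 1) m
      rw [Nat.sub_add_cancel hσ] at this
      rw [mul_comm]; omega
    rw [sum_Ico_eq_sum_range, show k + 1 + m + 1 - (k + 1 + 1) = m by omega, ← mul_sum]
    simp only [show ∀ t, k + 1 + 1 + t - 1 - (k + 1) = t by omega]
    calc σ * (σ - 1) ^ (k + 1) * ∑ t ∈ range m, σ ^ t
        = σ * (σ - 1) ^ k * ((σ - 1) * ∑ t ∈ range m, σ ^ t) := by ring
      _ ≤ σ * σ ^ k * σ ^ m := by gcongr; omega
      _ = σ ^ (k + 1 + m) := by ring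
  · simp [Ico_eq_empty_of_le (by omega : n + 1 ≤ k + 1 + 1)]

open scoped Classical in
theorem unbCountJ_eq_card (σ i j : ℕ) :
    unbCountJ σ i j = #{f : Fin i → Fin σ | Unbordered (ofFn f) ∧ HeadAvoids (Icc 1 j) f} := by
  rw [unbCountJ, Nat.card_eq_fintype_card, Fintype.card_subtype]
  simp only [HeadAvoids, mem_Icc, and_imp]

theorem pow_mul_pow_le_unbCountJ_add {σ j n : ℕ} (hσ : 1 ≤ σ) (hj : 1 ≤ j) (hjn : j ≤ n + 1) :
    (σ - 1) ^ (j + 1) * σ ^ (n + 1 - j) ≤ unbCountJ σ (n + 2) j + σ ^ n := by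
  classical
  calc (σ - 1) ^ (j + 1) * σ ^ (n + 1 - j)
      ≤ #{f : Fin (n + 2) → Fin σ | HeadAvoids (insert (n + 1) (Icc 1 j)) f} := by
        simpa using le_card_headAvoids_insert_last (α := Fin σ) hjn
    _ ≤ unbCountJ σ (n + 2) j + ∑ p ∈ Ico (j + 1) (n + 1),
          #{f : Fin (n + 2) → Fin σ | HeadAvoids (Icc 1 j) f ∧ (ofFn f).HasPeriod p} := by
        rw [unbCountJ_eq_card]
        refine card_headAvoids_le_add_sum (Finset.subset_insert _ _) fun p hp hpS => ?_
        simp only [mem_Ioo, mem_insert, mem_Icc, not_or] at hp hpS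
        simp only [mem_Ico]
        omega
    _ ≤ unbCountJ σ (n + 2) j +
          ∑ p ∈ Ico (j + 1) (n + 1), σ * (σ - 1) ^ j * σ ^ (p - 1 - j) := by
        gcongr with p hp
        have hp := mem_Ico.1 hp
        refine (card_headAvoids_hasPeriod_le (by omega) (by omega)).trans_eq ?_
        rw [card_headAvoids (by omega) (by intro k; simp only [mem_Icc, mem_Ioo]; omega),
          Nat.card_Icc, Nat.add_sub_cancel, Fintype.card_fin]
    _ ≤ unbCountJ σ (n + 2) j + σ ^ n := by gcongr; exact sum_Ico_mul_pow_le hσ hj n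

theorem unbCountJ_lower_bound (σ i j : ℕ) (hσ : 2 ≤ σ) (hj : 1 ≤ j) (hi : j + 1 ≤ i) :
    ((σ : ℝ) - 1) ^ (j + 1) * (σ : ℝ) ^ (i - j - 1) - (σ : ℝ) ^ (i - 2) ≤
      (unbCountJ σ i j : ℝ) := by
  obtain ⟨n, rfl⟩ : ∃ n, i = n + 2 := ⟨i - 2, by omega⟩
  have key := pow_mul_pow_le_unbCountJ_add (σ := σ) (by omega) hj (by omega : j ≤ n + 1)
  rw [show n + 2 - j - 1 = n + 1 - j by omega, Nat.add_sub_cancel]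
  have hcast : ((σ - 1 : ℕ) : ℝ) = σ - 1 := by rw [Nat.cast_sub (by omega), Nat.cast_one]
  have := (Nat.cast_le (α := ℝ)).2 key
  push_cast [hcast] at this
  linarith
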